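/- Let (X,d) be a proper geodesic metric space with base point b. If (x_k) is an unbounded almost geodesic sequence in X, then for every z ∈ X the limit h(z) = lim_k (d(z,x_k) − d(b,x_k)) exists, and the resulting function h is a horofunction (i.e. h lies in the closure of {h_y : y ∈ X} but is not equal to any h_y). -/
import Mathlib


/-- A metric space is geodesic if any two points are connected by a geodesic path. -/
def IsGeodesicSpace (X : Type*) [MetricSpace X] : Prop :=
  ∀ x y : X, ∃ γ : ℝ → X, γ 0 = x ∧ γ (dist x y) = y ∧
    ∀ s ∈ Set.Icc (0 : ℝ) (dist x y), ∀ t ∈ Set.Icc (0 : ℝ) (dist x y),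
      dist (γ s) (γ t) = |s - t|

/-- An "almost decreasing" sequence of reals which is bounded below converges. -/
lemma almost_dec_conv (a : ℕ → ℝ) (C : ℝ) (hb : ∀ n, C ≤ a n)
    (hd : ∀ ε > (0:ℝ), ∃ N : ℕ, ∀ n m : ℕ, N ≤ m → m ≤ n → a n ≤ a m + ε) :
    ∃ l, Filter.Tendsto a Filter.atTop (nhds l) := by
  have hc : CauchySeq a := by
    rw [Metric.cauchySeq_iff]
    intro ε hε
    obtain ⟨N, hN⟩ := hd (ε/3) (by linarith)
    have hSb : BddBelow (Set.range (fun i : ℕ => a (N + i))) :=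
      ⟨C, by rintro _ ⟨i, rfl⟩; exact hb _⟩
    have hne : (Set.range (fun i : ℕ => a (N + i))).Nonempty := ⟨a (N + 0), ⟨0, rfl⟩⟩
    set I := sInf (Set.range (fun i : ℕ => a (N + i))) with hI
    obtain ⟨v, ⟨i, rfl⟩, hvi⟩ := Real.lt_sInf_add_pos hne (show (0:ℝ) < ε/3 by linarith)
    refine ⟨N + i, fun p hp q hq => ?_⟩
    have hmem : ∀ n, N + i ≤ n → I ≤ a n ∧ a n ≤ I + 2 * (ε/3) := by
      intro n hn
      have hIle : I ≤ a n := by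
        have hn' : n = N + (n - N) := by omega
        rw [hn']
        exact csInf_le hSb ⟨n - N, rfl⟩
      have hle : a n ≤ a (N + i) + ε/3 := hN n (N + i) (by omega) hn
      exact ⟨hIle, by linarith⟩
    obtain ⟨h1, h2⟩ := hmem p hp
    obtain ⟨h3, h4⟩ := hmem q hq
    rw [Real.dist_eq, abs_lt]
    constructor <;> linarith
  exact cauchySeq_tendsto_of_complete hc

/-- Let `(X,d)` be a proper geodesic metric space with base point `b`. If `(x_k)` is
an unbounded almost geodesic sequence, then `h(z) = lim_k (d(z,x_k) − d(b,x_k))`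
exists for every `z`, and `h` is a horofunction: it lies in the closure of the set
of internal points `h_y` but is not an internal point. -/
theorem stmt5 {X : Type*} [MetricSpace X] [ProperSpace X]
    (hgeo : IsGeodesicSpace X) (b : X) (x : ℕ → X)
    (halmost : ∀ ε > (0 : ℝ), ∃ N : ℕ, ∀ n m : ℕ, N ≤ m → m ≤ n →
      dist (x n) (x m) + dist (x m) (x 0) - dist (x n) (x 0) < ε)
    (hunbounded : ∀ R : ℝ, ∃ k : ℕ, R ≤ dist b (x k)) :
    ∃ h : X → ℝ,
      (∀ z : X, Filter.Tendsto (fun k : ℕ => dist z (x k) - dist b (x k))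
        Filter.atTop (nhds (h z))) ∧
      h ∈ closure {f : X → ℝ | ∃ y : X, f = fun z => dist z y - dist b y} ∧
      h ∉ {f : X → ℝ | ∃ y : X, f = fun z => dist z y - dist b y} := by
  -- the auxiliary sequence, normalized at x 0
  have key : ∀ z : X, ∃ l, Filter.Tendsto (fun n => dist z (x n) - dist (x n) (x 0))
      Filter.atTop (nhds l) := by
    intro z
    apply almost_dec_conv _ (-(dist z (x 0)))
    · intro n
      have h1 := dist_triangle (x n) z (x 0)
      have h2 := dist_comm z (x n)
      linarith
    · intro ε hε
      obtain ⟨N, hN⟩ := halmost ε hε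
      refine ⟨N, fun n m hm hn => ?_⟩
      have h1 := hN n m hm hn
      have h2 := dist_triangle z (x m) (x n)
      have h3 := dist_comm (x n) (x m)
      linarith
  choose L hL using key
  have htend : ∀ z : X, Filter.Tendsto (fun k : ℕ => dist z (x k) - dist b (x k))
      Filter.atTop (nhds (L z - L b)) := by
    intro z
    have heq : (fun k : ℕ => dist z (x k) - dist b (x k)) =
        fun k => (dist z (x k) - dist (x k) (x 0)) - (dist b (x k) - dist (x k) (x 0)) := by
      funext k; ring
    rw [heq]
    exact (hL z).sub (hL b)
  refine ⟨fun z => L z - L b, htend, ?_, ?_⟩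
  · have htp : Filter.Tendsto (fun k : ℕ => fun z : X => dist z (x k) - dist b (x k))
        Filter.atTop (nhds (fun z => L z - L b)) := by
      rw [tendsto_pi_nhds]
      exact htend
    exact mem_closure_of_tendsto htp
      (Filter.Eventually.of_forall fun k => ⟨x k, rfl⟩)
  · rintro ⟨y, hy⟩
    obtain ⟨N, hN⟩ := halmost 1 one_pos
    have hLbound : ∀ m, N ≤ m → L (x m) ≤ -dist (x m) (x 0) + 1 := by
      intro m hm
      apply le_of_tendsto (hL (x m))
      filter_upwards [Filter.eventually_ge_atTop m] with n hn
      have h1 := hN n m hm hn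
      have h2 := dist_comm (x n) (x m)
      have h3 := dist_nonneg (x := x n) (y := x m)
      linarith
    set B := (Finset.range (N+1)).sup' (by simp) (fun j => dist b (x j)) with hB
    set T := 2 - L b + dist b y with hT
    obtain ⟨k, hk⟩ := hunbounded (max B (T + dist b (x 0)) + 1)
    have hkN : N ≤ k := by
      by_contra hc
      push_neg at hc
      have h1 : dist b (x k) ≤ B :=
        Finset.le_sup' (fun j => dist b (x j)) (Finset.mem_range.mpr (by omega))
      have h2 := le_max_left B (T + dist b (x 0))
      linarith
    have hdk : T ≤ dist (x k) (x 0) := by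
      have h1 := dist_triangle b (x 0) (x k)
      have h2 := le_max_right B (T + dist b (x 0))
      have h3 := dist_comm (x 0) (x k)
      linarith
    have h1 : L (x k) ≤ -dist (x k) (x 0) + 1 := hLbound k hkN
    have h2 : L (x k) - L b = dist (x k) y - dist b y := congrFun hy (x k)
    have h3 : (0:ℝ) ≤ dist (x k) y := dist_nonneg
    linarith
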